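/- Every tournament has at most one minimal τ-retentive set of size 3. -/

import Mathlib

variable {V : Type}

/-- Inneighbors of `v` inside the subtournament on `s` (excluding `v` itself). -/
def inn [DecidableEq V] (r : V → V → Prop) [DecidableRel r] (s : Finset V) (v : V) :
    Finset V :=
  (s.filter fun u => r u v).erase v

lemma inn_card_lt [DecidableEq V] (r : V → V → Prop) [DecidableRel r]
    (s : Finset V) (v : V) (hv : v ∈ s) : (inn r s v).card < s.card := by
  have h1 : inn r s v ⊆ s.erase v := by
    intro x hx
    rcases Finset.mem_erase.mp hx with ⟨hxv, hx2⟩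
    exact Finset.mem_erase.mpr ⟨hxv, (Finset.mem_filter.mp hx2).1⟩
  calc (inn r s v).card ≤ (s.erase v).card := Finset.card_le_card h1
    _ < s.card := Finset.card_erase_lt_of_mem hv

/-- The tournament equilibrium set of the subtournament of `r` on `s`:
the union of all minimal τ-retentive sets. -/
def tau [DecidableEq V] (r : V → V → Prop) [DecidableRel r] (s : Finset V) : Set V :=
  {x | ∃ A : Finset V, x ∈ A ∧ A ⊆ s ∧ A.Nonempty ∧
    (∀ v, v ∈ s → v ∈ A → ((inn r s v).Nonempty → tau r (inn r s v) ⊆ ↑A)) ∧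
    ∀ B : Finset V, B ⊆ s → B ⊂ A →
      ¬ (B.Nonempty ∧
        ∀ v, v ∈ s → v ∈ B → ((inn r s v).Nonempty → tau r (inn r s v) ⊆ ↑B))}
termination_by s.card
decreasing_by
  all_goals exact inn_card_lt r s v (by assumption)

/-- `A` is a τ-retentive set of the tournament on `s`. -/
def Retentive [DecidableEq V] (r : V → V → Prop) [DecidableRel r] (s A : Finset V) : Prop :=
  A ⊆ s ∧ A.Nonempty ∧ ∀ v ∈ A, (inn r s v).Nonempty → tau r (inn r s v) ⊆ ↑A

/-- `A` is a minimal τ-retentive set of the tournament on `s`. -/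
def MinRetentive [DecidableEq V] (r : V → V → Prop) [DecidableRel r] (s A : Finset V) : Prop :=
  Retentive r s A ∧ ∀ B, Retentive r s B → B ⊆ A → B = A

/-- `r` is a tournament on the vertex set `s`. -/
def IsTournament (r : V → V → Prop) (s : Finset V) : Prop :=
  (∀ v ∈ s, ¬ r v v) ∧ ∀ u ∈ s, ∀ v ∈ s, u ≠ v → (r u v ↔ ¬ r v u)

/-- `u` is the captain of `v` in the subtournament on `s`:
`u` dominates `v` and all other inneighbors of `v`. -/
def IsCaptain (r : V → V → Prop) (s : Finset V) (u v : V) : Prop :=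
  u ∈ s ∧ v ∈ s ∧ r u v ∧ ∀ w ∈ s, w ≠ u → r w v → r u w

/-- The (undirected) domination graph of the subtournament on `s`. -/
def domGraph (r : V → V → Prop) (s : Finset V) : SimpleGraph V where
  Adj u v := (IsCaptain r s u v ∨ IsCaptain r s v u) ∧ u ≠ v
  symm := by
    constructor
    intro u v h
    exact ⟨h.1.symm, h.2.symm⟩
  loopless := by
    constructor
    intro u h
    exact h.2 rfl

/-!
In a minimal τ-retentive set `{a, b, c}` every vertex needs an inneighbor inside the set, so the
set is a cyclic triangle `a → b → c → a`; then `τ` of the inneighborhood of `b` is `{a}`, which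
forces `a` to beat every other inneighbor of `b`. Hence the set is a cycle of captains. Captains
are unique, so two such cycles sharing a vertex coincide. And they cannot be disjoint: every
vertex `x` with captain `y` (both off the second cycle) is beaten by exactly one vertex of each
captain pair of that cycle, which is impossible along a cycle of odd length.
-/

section Retentive

variable [DecidableEq V] (r : V → V → Prop) [DecidableRel r] {t A : Finset V}

lemma mem_inn {u v : V} : u ∈ inn r t v ↔ u ≠ v ∧ u ∈ t ∧ r u v := by
  simp [inn]

lemma inn_subset (v : V) : inn r t v ⊆ t :=
  fun _ hu => ((mem_inn r).1 hu).2.1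

lemma mem_tau_iff {x : V} : x ∈ tau r t ↔ ∃ A, x ∈ A ∧ MinRetentive r t A := by
  rw [tau]
  constructor
  · rintro ⟨A, hxA, hAt, hAne, hAcl, hAmin⟩
    refine ⟨A, hxA, ⟨hAt, hAne, fun v hv => hAcl v (hAt hv) hv⟩, fun B hB hBA => ?_⟩
    by_contra hne
    exact hAmin B (hBA.trans hAt) (hBA.ssubset_of_ne hne)
      ⟨hB.2.1, fun v _ hv => hB.2.2 v hv⟩
  · rintro ⟨A, hxA, ⟨hAt, hAne, hAcl⟩, hAmin⟩
    refine ⟨A, hxA, hAt, hAne, fun v _ hv => hAcl v hv, fun B hBt hBA hB => ?_⟩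
    have := hAmin B ⟨hBt, hB.1, fun v hv => hB.2 v (hBt hv) hv⟩ hBA.subset
    exact hBA.ne this

lemma tau_subset : tau r t ⊆ ↑t := by
  intro x hx
  obtain ⟨A, hxA, hA⟩ := (mem_tau_iff r).1 hx
  exact hA.1.1 hxA

lemma MinRetentive.coe_subset_tau (hA : MinRetentive r t A) : ↑A ⊆ tau r t :=
  fun _ hx => (mem_tau_iff r).2 ⟨A, hx, hA⟩

lemma retentive_self (ht : t.Nonempty) : Retentive r t t :=
  ⟨subset_rfl, ht, fun v _ _ => (tau_subset r).trans (Finset.coe_subset.2 (inn_subset r v))⟩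

lemma exists_minRetentive (ht : t.Nonempty) : ∃ A, MinRetentive r t A := by
  classical
  obtain ⟨A, hA, hmin⟩ := Finset.exists_min_image (t.powerset.filter (Retentive r t))
    Finset.card ⟨t, by simpa using retentive_self r ht⟩
  simp only [Finset.mem_filter, Finset.mem_powerset] at hA
  refine ⟨A, hA.2, fun B hB hBA => Finset.eq_of_subset_of_card_le hBA ?_⟩
  exact hmin B (by simpa using ⟨hB.1, hB⟩)

lemma tau_nonempty (ht : t.Nonempty) : (tau r t).Nonempty := by
  obtain ⟨A, hA⟩ := exists_minRetentive r ht
  obtain ⟨x, hx⟩ := hA.1.2.1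
  exact ⟨x, (mem_tau_iff r).2 ⟨A, hx, hA⟩⟩

/-- Otherwise `τ` of the inneighborhood of `a`, which avoids `a`, would have to lie in the minimal
retentive set `{a}`. -/
lemma inn_eq_empty_of_tau_subset_singleton {a : V} (ht : t.Nonempty) (hsub : tau r t ⊆ {a}) :
    a ∈ t ∧ inn r t a = ∅ := by
  obtain ⟨x, hx⟩ := tau_nonempty r ht
  obtain rfl : x = a := hsub hx
  obtain ⟨A, hxA, hA⟩ := (mem_tau_iff r).1 hx
  refine ⟨hA.1.1 hxA, Finset.eq_empty_of_forall_notMem fun w hw => ?_⟩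
  obtain ⟨y, hy⟩ := tau_nonempty r ⟨w, hw⟩
  have hya : y = x := hsub (hA.coe_subset_tau r (hA.1.2.2 x hxA ⟨w, hw⟩ hy))
  exact ((mem_inn r).1 (tau_subset r hy)).1 hya

lemma MinRetentive.inn_nonempty (hA : MinRetentive r t A) (hcard : 1 < A.card) {v : V}
    (hv : v ∈ A) : (inn r t v).Nonempty := by
  by_contra hinn
  have hret : Retentive r t {v} :=
    ⟨Finset.singleton_subset_iff.2 (hA.1.1 hv), Finset.singleton_nonempty v,
      fun u hu hu' => absurd (Finset.mem_singleton.1 hu ▸ hu') hinn⟩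
  have := hA.2 {v} hret (Finset.singleton_subset_iff.2 hv)
  simp [← this] at hcard

lemma MinRetentive.exists_mem_beats (hA : MinRetentive r t A) (hcard : 1 < A.card) {v : V}
    (hv : v ∈ A) : ∃ u ∈ A, u ≠ v ∧ r u v := by
  have hinn := hA.inn_nonempty r hcard hv
  obtain ⟨u, hu⟩ := tau_nonempty r hinn
  obtain ⟨huv, -, hruv⟩ := (mem_inn r).1 (tau_subset r hu)
  exact ⟨u, hA.1.2.2 v hv hinn hu, huv, hruv⟩

end Retentive

section Captain

variable {r : V → V → Prop} {s : Finset V}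

lemma IsTournament.not_beats_of_beats (hT : IsTournament r s) {u v : V} (hu : u ∈ s)
    (hv : v ∈ s) (huv : r u v) : ¬ r v u := by
  have hne : u ≠ v := by rintro rfl; exact hT.1 u hu huv
  exact (hT.2 u hu v hv hne).1 huv

lemma Retentive.isCaptain [DecidableEq V] [DecidableRel r] (hT : IsTournament r s) {A : Finset V}
    (hA : Retentive r s A) {a v : V} (hv : v ∈ A) (hinn : (inn r s v).Nonempty)
    (huniq : ∀ x ∈ A, x ≠ v → r x v → x = a) : IsCaptain r s a v := by
  have hsub : tau r (inn r s v) ⊆ {a} := fun x hx => by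
    obtain ⟨hxv, -, hrxv⟩ := (mem_inn r).1 (tau_subset r hx)
    exact huniq x (hA.2.2 v hv hinn hx) hxv hrxv
  obtain ⟨ha, hempty⟩ := inn_eq_empty_of_tau_subset_singleton r hinn hsub
  obtain ⟨-, has, hrav⟩ := (mem_inn r).1 ha
  refine ⟨has, hA.1 hv, hrav, fun w hws hwa hrwv => ?_⟩
  have hwv : w ≠ v := by rintro rfl; exact hT.1 w hws hrwv
  have hwinn : w ∈ inn r s v := (mem_inn r).2 ⟨hwv, hws, hrwv⟩
  have hnwa : ¬ r w a := fun hrwa => by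
    simpa [hempty] using (mem_inn r).2 ⟨hwa, hwinn, hrwa⟩
  exact (hT.2 a has w hws (Ne.symm hwa)).2 hnwa

lemma IsTournament.exists_cycle_of_card_eq_three [DecidableEq V] (hT : IsTournament r s)
    {A : Finset V} (hAs : A ⊆ s) (hcard : A.card = 3) (hin : ∀ v ∈ A, ∃ u ∈ A, u ≠ v ∧ r u v) :
    ∃ a b c, A = {a, b, c} ∧ r a b ∧ r b c ∧ r c a := by
  obtain ⟨x, hx⟩ := Finset.card_pos.1 (by omega : 0 < A.card)
  obtain ⟨y, hy, hyx, hryx⟩ := hin x hx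
  obtain ⟨z, hz, hzy, hrzy⟩ := hin y hy
  have hzx : z ≠ x := by
    rintro rfl; exact hT.not_beats_of_beats (hAs hy) (hAs hz) hryx hrzy
  have hA : A = {x, y, z} := by
    refine (Finset.eq_of_subset_of_card_le ?_ ?_).symm
    · simp [Finset.insert_subset_iff, hx, hy, hz]
    · rw [hcard, Finset.card_eq_three.2 ⟨x, y, z, hyx.symm, hzx.symm, hzy.symm, rfl⟩]
  obtain ⟨u, hu, huz, hruz⟩ := hin z hz
  have hux : u = x := by
    rw [hA] at hu
    simp only [Finset.mem_insert, Finset.mem_singleton] at hu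
    rcases hu with rfl | rfl | rfl
    · rfl
    · exact absurd hruz (hT.not_beats_of_beats (hAs hz) (hAs hy) hrzy)
    · exact absurd rfl huz
  subst hux
  exact ⟨u, z, y, by rw [hA]; ext; simp; tauto, hruz, hrzy, hryx⟩

def IsCaptainCycle (r : V → V → Prop) (s : Finset V) (a b c : V) : Prop :=
  IsCaptain r s a b ∧ IsCaptain r s b c ∧ IsCaptain r s c a

lemma Retentive.isCaptain_of_eq_triple [DecidableEq V] [DecidableRel r] (hT : IsTournament r s)
    {A : Finset V} (hA : Retentive r s A) {p q o : V} (hAeq : A = {p, q, o})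
    (hinn : (inn r s q).Nonempty) (hpq : r p q) (hqo : r q o) : IsCaptain r s p q := by
  have hqA : q ∈ A := by simp [hAeq]
  have hoA : o ∈ A := by simp [hAeq]
  refine hA.isCaptain hT hqA hinn fun x hx hxq hrxq => ?_
  rw [hAeq] at hx
  simp only [Finset.mem_insert, Finset.mem_singleton] at hx
  rcases hx with rfl | rfl | rfl
  · rfl
  · exact absurd rfl hxq
  · exact absurd hrxq (hT.not_beats_of_beats (hA.1 hqA) (hA.1 hoA) hqo)

lemma MinRetentive.exists_isCaptainCycle [DecidableEq V] [DecidableRel r]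
    (hT : IsTournament r s) {A : Finset V} (hA : MinRetentive r s A) (hcard : A.card = 3) :
    ∃ a b c, A = {a, b, c} ∧ IsCaptainCycle r s a b c := by
  obtain ⟨a, b, c, hAeq, hab, hbc, hca⟩ := hT.exists_cycle_of_card_eq_three hA.1.1 hcard
    fun v hv => hA.exists_mem_beats r (by omega) hv
  have hinn : ∀ {v}, v ∈ A → (inn r s v).Nonempty := hA.inn_nonempty r (by omega)
  refine ⟨a, b, c, hAeq, ?_, ?_, ?_⟩
  · exact hA.1.isCaptain_of_eq_triple hT hAeq (hinn (by simp [hAeq])) hab hbc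
  · refine hA.1.isCaptain_of_eq_triple hT (o := a) ?_ (hinn (by simp [hAeq])) hbc hca
    rw [hAeq]; ext; simp; tauto
  · refine hA.1.isCaptain_of_eq_triple hT (o := b) ?_ (hinn (by simp [hAeq])) hca hab
    rw [hAeq]; ext; simp; tauto

lemma IsCaptain.eq (hT : IsTournament r s) {x y v : V} (hx : IsCaptain r s x v)
    (hy : IsCaptain r s y v) : x = y := by
  by_contra hne
  exact hT.not_beats_of_beats hx.1 hy.1 (hx.2.2.2 y hy.1 (Ne.symm hne) hy.2.2.1)
    (hy.2.2.2 x hx.1 hne hx.2.2.1)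

/-- If both `u` and `w` beat `x`, then `y` beats both and so cannot lose to `u`; if neither does,
`x` beats `w` and so loses to `u`. -/
lemma IsCaptain.beats_iff_not_beats (hT : IsTournament r s) {x y u w : V}
    (hyx : IsCaptain r s y x) (huw : IsCaptain r s u w) (hux : u ≠ x) (hwx : w ≠ x)
    (huy : u ≠ y) (hwy : w ≠ y) : r u x ↔ ¬ r w x := by
  constructor
  · intro hrux hrwx
    have hryu : r y u := hyx.2.2.2 u huw.1 huy hrux
    have hryw : r y w := hyx.2.2.2 w huw.2.1 hwy hrwx
    exact hT.not_beats_of_beats hyx.1 huw.1 hryu (huw.2.2.2 y hyx.1 huy.symm hryw)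
  · intro hnwx
    by_contra hnux
    have hrxw : r x w := (hT.2 x hyx.2.1 w huw.2.1 hwx.symm).2 hnwx
    exact hnux (huw.2.2.2 x hyx.2.1 hux.symm hrxw)

lemma IsCaptainCycle.rotate {a b c : V} (h : IsCaptainCycle r s a b c) :
    IsCaptainCycle r s b c a :=
  ⟨h.2.1, h.2.2, h.1⟩

lemma IsCaptainCycle.exists_rotation [DecidableEq V] {a b c v : V}
    (h : IsCaptainCycle r s a b c) (hv : v ∈ ({a, b, c} : Finset V)) :
    ∃ p q, IsCaptainCycle r s p q v ∧ ({a, b, c} : Finset V) = {p, q, v} := by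
  simp only [Finset.mem_insert, Finset.mem_singleton] at hv
  rcases hv with rfl | rfl | rfl
  · exact ⟨b, c, h.rotate, by ext; simp; tauto⟩
  · exact ⟨c, a, h.rotate.rotate, by ext; simp; tauto⟩
  · exact ⟨a, b, h, rfl⟩

lemma IsCaptainCycle.eq_of_eq_third (hT : IsTournament r s) {a b a' b' c : V}
    (h : IsCaptainCycle r s a b c) (h' : IsCaptainCycle r s a' b' c) : a = a' ∧ b = b' := by
  obtain rfl := h.2.1.eq hT h'.2.1
  exact ⟨h.1.eq hT h'.1, rfl⟩

lemma IsCaptain.mem_or_mem_of_isCaptainCycle [DecidableEq V] (hT : IsTournament r s)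
    {x y a b c : V} (hyx : IsCaptain r s y x) (h : IsCaptainCycle r s a b c) :
    x ∈ ({a, b, c} : Finset V) ∨ y ∈ ({a, b, c} : Finset V) := by
  by_contra hout
  simp only [Finset.mem_insert, Finset.mem_singleton, not_or, @eq_comm _ x, @eq_comm _ y] at hout
  obtain ⟨⟨hax, hbx, hcx⟩, hay, hby, hcy⟩ := hout
  have hab := hyx.beats_iff_not_beats hT h.1 hax hbx hay hby
  have hbc := hyx.beats_iff_not_beats hT h.2.1 hbx hcx hby hcy
  have hca := hyx.beats_iff_not_beats hT h.2.2 hcx hax hcy hay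
  tauto

end Captain

theorem stmt9 [DecidableEq V] (r : V → V → Prop) [DecidableRel r] (s : Finset V)
    (hT : IsTournament r s) (R1 R2 : Finset V)
    (h1 : MinRetentive r s R1) (h2 : MinRetentive r s R2)
    (hc1 : R1.card = 3) (hc2 : R2.card = 3) :
    R1 = R2 := by
  obtain ⟨a, b, c, rfl, h⟩ := h1.exists_isCaptainCycle hT hc1
  obtain ⟨a', b', c', rfl, h'⟩ := h2.exists_isCaptainCycle hT hc2
  obtain ⟨v, hv, hv'⟩ : ∃ v ∈ ({a, b, c} : Finset V), v ∈ ({a', b', c'} : Finset V) := by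
    rcases h.2.2.mem_or_mem_of_isCaptainCycle hT h' with ha | hc
    · exact ⟨a, by simp, ha⟩
    · exact ⟨c, by simp, hc⟩
  obtain ⟨p, q, hpq, hR1⟩ := h.exists_rotation hv
  obtain ⟨p', q', hpq', hR2⟩ := h'.exists_rotation hv'
  obtain ⟨rfl, rfl⟩ := hpq.eq_of_eq_third hT hpq'
  rw [hR1, hR2]
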